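/- arXiv:2308.04399 — 10 statements merged into one kernel-verified Lean document; each statement's English description precedes it below -/
import Mathlib

section
/- Let f : ℝ → ℝ be differentiable on [a,b] with f'(a) > 0 and f' concave on [a,b]. Then f is strictly unimodal on [a,b]: there exists m ∈ [a,b] such that f is strictly increasing on [a,m] and strictly decreasing on [m,b]. -/
/-! The derivative `f'` is concave on `[a, b]` and positive at `a`. A concave function is at least
the minimum of its values at the ends of a segment, so `f' > 0` on an initial segment `[a, m)`;
and once `f'` has reached a non-positive value after `a`, the slopes of its secants, which
decrease, are negative, so `f' < 0` from then on. Hence `f'` changes sign exactly once, at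
`m = sup {x ∈ [a, b] | 0 < f' x}`, and the mean value theorem does the rest. -/

open Set

namespace ConcaveOn

variable {s : Set ℝ} {g : ℝ → ℝ} {x y z : ℝ}

lemma pos_of_pos_of_le_of_le (hg : ConcaveOn ℝ s g) (hx : x ∈ s) (hz : z ∈ s)
    (hxy : x ≤ y) (hyz : y ≤ z) (hgx : 0 < g x) (hgz : 0 < g z) : 0 < g y :=
  (lt_min hgx hgz).trans_le <|
    hg.min_le_of_mem_segment hx hz (by rw [segment_eq_Icc (hxy.trans hyz)]; exact ⟨hxy, hyz⟩)

lemma neg_of_pos_of_nonpos (hg : ConcaveOn ℝ s g) (hx : x ∈ s) (hz : z ∈ s)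
    (hxy : x < y) (hyz : y < z) (hgx : 0 < g x) (hgy : g y ≤ 0) : g z < 0 := by
  have hleft : (g y - g x) / (y - x) < 0 := div_neg_of_neg_of_pos (by linarith) (by linarith)
  have hright : (g z - g y) / (z - y) < 0 := (hg.slope_anti_adjacent hx hz hxy hyz).trans_lt hleft
  linarith [(div_lt_iff₀ (sub_pos.2 hyz)).mp hright]

end ConcaveOn

theorem ConcaveOn.exists_pos_Ico_neg_Ioc {g : ℝ → ℝ} {a b : ℝ} (hab : a ≤ b)
    (hg : ConcaveOn ℝ (Icc a b) g) (ha : 0 < g a) :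
    ∃ m ∈ Icc a b, (∀ x ∈ Ico a m, 0 < g x) ∧ ∀ x ∈ Ioc m b, g x < 0 := by
  set S : Set ℝ := {x ∈ Icc a b | 0 < g x}
  have haI : a ∈ Icc a b := left_mem_Icc.mpr hab
  have haS : a ∈ S := ⟨haI, ha⟩
  have hS : BddAbove S := ⟨b, fun x hx => hx.1.2⟩
  have ham : a ≤ sSup S := le_csSup hS haS
  refine ⟨sSup S, ⟨ham, csSup_le ⟨a, haS⟩ fun x hx => hx.1.2⟩, ?_, ?_⟩
  · rintro x ⟨hax, hxm⟩
    obtain ⟨z, hzS, hxz⟩ := exists_lt_of_lt_csSup ⟨a, haS⟩ hxm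
    exact hg.pos_of_pos_of_le_of_le haI hzS.1 hax hxz.le ha hzS.2
  · rintro x ⟨hmx, hxb⟩
    obtain ⟨y, hmy, hyx⟩ := exists_between hmx
    have hgy : g y ≤ 0 := by
      by_contra! hgy
      exact (le_csSup hS ⟨⟨ham.trans hmy.le, hyx.le.trans hxb⟩, hgy⟩).not_gt hmy
    exact hg.neg_of_pos_of_nonpos haI ⟨by linarith, hxb⟩ (by linarith) hyx ha hgy

/-- If `f` is differentiable on `[a,b]`, `f' a > 0`, and `f'` is concave on `[a,b]`,
then `f` is strictly unimodal on `[a,b]`: there is `m ∈ [a,b]` with `f` strictly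
increasing on `[a,m]` and strictly decreasing on `[m,b]`. -/
theorem stmt0 (f : ℝ → ℝ) (a b : ℝ) (hab : a ≤ b)
    (hdiff : DifferentiableOn ℝ f (Set.Icc a b))
    (hpos : 0 < deriv f a)
    (hconc : ConcaveOn ℝ (Set.Icc a b) (deriv f)) :
    ∃ m ∈ Set.Icc a b,
      StrictMonoOn f (Set.Icc a m) ∧ StrictAntiOn f (Set.Icc m b) := by
  obtain ⟨m, ⟨ham, hmb⟩, hderiv_pos, hderiv_neg⟩ := hconc.exists_pos_Ico_neg_Ioc hab hpos
  refine ⟨m, ⟨ham, hmb⟩, ?_, ?_⟩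
  · refine strictMonoOn_of_deriv_pos (convex_Icc a m)
      (hdiff.continuousOn.mono (Icc_subset_Icc_right hmb)) fun x hx => ?_
    rw [interior_Icc] at hx
    exact hderiv_pos x (Ioo_subset_Ico_self hx)
  · refine strictAntiOn_of_deriv_neg (convex_Icc m b)
      (hdiff.continuousOn.mono (Icc_subset_Icc_left ham)) fun x hx => ?_
    rw [interior_Icc] at hx
    exact hderiv_neg x (Ioo_subset_Ioc_self hx)
end

section
/- In the one-specialist fine-tuning game with costs φ₀(α₀) = c₀α₀^{k₀} and φ₁(α₁;α₀) = c₁(α₁-α₀)^{k₁} (c₀,c₁ > 0, k₀,k₁ > 1) and revenue r(α₁) = α₁, for fixed δ ∈ [0,1] the unique sub-game perfect equilibrium strategies are α₀* = (δ/(k₀c₀))^{1/(k₀-1)} and α₁* = (δ/(k₀c₀))^{1/(k₀-1)} + ((1-δ)/(k₁c₁))^{1/(k₁-1)}. -/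
/-!
Both players face the same one-dimensional problem: maximize `m t - c t^k` over `t ≥ 0`
with `m ≥ 0`, `c > 0`, `k > 1`. The objective is strictly concave, and its derivative
vanishes at `t = (m/(kc))^(1/(k-1))` (also when `m = 0`, since `k - 1 > 0`), so this point
is the unique maximizer. The specialist's problem is this one shifted by `α₀` (with
`m = 1 - δ`), and once the specialist's response is substituted, the generalist's is this
one plus a constant (with `m = δ`).
-/

open Set

lemma isMaxOn_add_const_iff {α β : Type*} [AddGroup β] [Preorder β] [AddRightMono β]
    {f : α → β} {s : Set α} {a : α} (b : β) :
    IsMaxOn (fun x => f x + b) s a ↔ IsMaxOn f s a := by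
  simp only [isMaxOn_iff, add_le_add_iff_right]

lemma isMaxOn_comp_sub_Ici_iff {α β : Type*} [AddCommGroup α] [PartialOrder α]
    [IsOrderedAddMonoid α] [Preorder β] {f : α → β} {a x : α} :
    IsMaxOn (fun y => f (y - a)) (Ici a) x ↔ IsMaxOn f (Ici 0) (x - a) := by
  simp only [isMaxOn_iff, mem_Ici]
  constructor
  · intro h t ht
    simpa using h (t + a) (le_add_of_nonneg_left ht)
  · intro h y hy
    exact h (y - a) (sub_nonneg.2 hy)

lemma StrictConvexOn.const_mul {E : Type*} [AddCommMonoid E] [Module ℝ E] {s : Set E}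
    {f : E → ℝ} {c : ℝ} (hc : 0 < c) (hf : StrictConvexOn ℝ s f) :
    StrictConvexOn ℝ s (fun x => c * f x) := by
  refine ⟨hf.1, fun x hx y hy hxy a b ha hb hab => ?_⟩
  have := mul_lt_mul_of_pos_left (hf.2 hx hy hxy ha hb hab) hc
  simp only [smul_eq_mul] at this ⊢
  linarith

lemma ConcaveOn.isMaxOn_of_hasDerivAt_eq_zero {S : Set ℝ} {f : ℝ → ℝ} {x : ℝ}
    (hf : ConcaveOn ℝ S f) (hx : x ∈ S) (hd : HasDerivAt f 0 x) : IsMaxOn f S x := by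
  refine isMaxOn_iff.2 fun y hy => ?_
  rcases lt_trichotomy y x with hyx | rfl | hxy
  · have := hf.le_slope_of_hasDerivAt hy hx hyx hd
    rw [slope_def_field, le_div_iff₀ (sub_pos.2 hyx)] at this
    linarith
  · exact le_rfl
  · have := hf.slope_le_of_hasDerivAt hx hy hxy hd
    rw [slope_def_field, div_le_iff₀ (sub_pos.2 hxy)] at this
    linarith

section LinearSubRpow

variable {m c k : ℝ}

lemma strictConcaveOn_linear_sub_rpow (m : ℝ) (hc : 0 < c) (hk : 1 < k) :
    StrictConcaveOn ℝ (Ici 0) (fun t => m * t - c * t ^ k) :=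
  ((LinearMap.mul ℝ ℝ m).concaveOn (convex_Ici 0)).sub_strictConvexOn
    ((strictConvexOn_rpow hk).const_mul hc)

lemma hasDerivAt_linear_sub_rpow (m c : ℝ) (hk : 1 ≤ k) (t : ℝ) :
    HasDerivAt (fun t => m * t - c * t ^ k) (m - c * (k * t ^ (k - 1))) t :=
  (((hasDerivAt_id t).const_mul m).sub
    ((Real.hasDerivAt_rpow_const (Or.inr hk)).const_mul c)).congr_deriv (by simp)

lemma hasDerivAt_linear_sub_rpow_optimum (hm : 0 ≤ m) (hc : 0 < c) (hk : 1 < k) :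
    HasDerivAt (fun t => m * t - c * t ^ k) 0 ((m / (k * c)) ^ (1 / (k - 1))) := by
  convert hasDerivAt_linear_sub_rpow m c hk.le _ using 1
  have hk0 : 0 < k := by linarith
  rw [one_div, Real.rpow_inv_rpow (by positivity) (by linarith)]
  field_simp
  ring

lemma isMaxOn_linear_sub_rpow_iff (hm : 0 ≤ m) (hc : 0 < c) (hk : 1 < k) {s : ℝ}
    (hs : 0 ≤ s) :
    IsMaxOn (fun t => m * t - c * t ^ k) (Ici 0) s ↔ s = (m / (k * c)) ^ (1 / (k - 1)) := by
  have hconc := strictConcaveOn_linear_sub_rpow m hc hk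
  have hopt_nonneg : 0 ≤ (m / (k * c)) ^ (1 / (k - 1)) :=
    Real.rpow_nonneg (div_nonneg hm (by positivity)) _
  have hopt := hconc.concaveOn.isMaxOn_of_hasDerivAt_eq_zero hopt_nonneg
    (hasDerivAt_linear_sub_rpow_optimum hm hc hk)
  exact ⟨fun h => hconc.eq_of_isMaxOn h hopt hs hopt_nonneg, fun h => h ▸ hopt⟩

lemma isMaxOn_linear_sub_rpow_sub_iff (hm : 0 ≤ m) (hc : 0 < c) (hk : 1 < k) {a s : ℝ}
    (hs : a ≤ s) :
    IsMaxOn (fun x => m * x - c * (x - a) ^ k) (Ici a) s ↔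
      s = a + (m / (k * c)) ^ (1 / (k - 1)) := by
  have hshift : (fun x => m * x - c * (x - a) ^ k) =
      fun x => (m * (x - a) - c * (x - a) ^ k) + m * a := by
    funext; ring
  rw [hshift, isMaxOn_add_const_iff, isMaxOn_comp_sub_Ici_iff (f := fun t => m * t - c * t ^ k),
    isMaxOn_linear_sub_rpow_iff hm hc hk (sub_nonneg.2 hs), sub_eq_iff_eq_add']

lemma isMaxOn_linear_add_sub_rpow_iff (hm : 0 ≤ m) (hc : 0 < c) (hk : 1 < k) (b : ℝ) {s : ℝ}
    (hs : 0 ≤ s) :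
    IsMaxOn (fun x => m * (x + b) - c * x ^ k) (Ici 0) s ↔
      s = (m / (k * c)) ^ (1 / (k - 1)) := by
  have hshift : (fun x => m * (x + b) - c * x ^ k) = fun x => (m * x - c * x ^ k) + m * b := by
    funext; ring
  rw [hshift, isMaxOn_add_const_iff, isMaxOn_linear_sub_rpow_iff hm hc hk hs]

end LinearSubRpow

/-- One-specialist fine-tuning game with polynomial costs: for a fixed `δ ∈ [0,1]`,
the unique subgame-perfect equilibrium strategies are
`α₀* = (δ/(k₀c₀))^(1/(k₀-1))` and `α₁* = α₀* + ((1-δ)/(k₁c₁))^(1/(k₁-1))`. -/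
theorem stmt2 (c0 c1 k0 k1 δ : ℝ)
    (hc0 : 0 < c0) (hc1 : 0 < c1) (hk0 : 1 < k0) (hk1 : 1 < k1)
    (hδ0 : 0 ≤ δ) (hδ1 : δ ≤ 1)
    (α0s α1s : ℝ)
    (hα0s : α0s = (δ / (k0 * c0)) ^ (1 / (k0 - 1)))
    (hα1s : α1s = (δ / (k0 * c0)) ^ (1 / (k0 - 1))
                  + ((1 - δ) / (k1 * c1)) ^ (1 / (k1 - 1))) :
    -- the specialist's best response to any general performance `α₀ ≥ 0`
    -- is unique and equals `α₀ + ((1-δ)/(k₁c₁))^(1/(k₁-1))`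
    (∀ α0, 0 ≤ α0 →
      IsMaxOn (fun α1 => (1 - δ) * α1 - c1 * (α1 - α0) ^ k1) (Set.Ici α0)
        (α0 + ((1 - δ) / (k1 * c1)) ^ (1 / (k1 - 1))) ∧
      ∀ α1 ∈ Set.Ici α0,
        IsMaxOn (fun α1 => (1 - δ) * α1 - c1 * (α1 - α0) ^ k1) (Set.Ici α0) α1 →
        α1 = α0 + ((1 - δ) / (k1 * c1)) ^ (1 / (k1 - 1))) ∧
    -- anticipating this, the generalist's optimal investment is unique and
    -- equals `α₀*`
    (IsMaxOn
        (fun α0 => δ * (α0 + ((1 - δ) / (k1 * c1)) ^ (1 / (k1 - 1))) - c0 * α0 ^ k0)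
        (Set.Ici (0 : ℝ)) α0s ∧
      ∀ α0 ∈ Set.Ici (0 : ℝ),
        IsMaxOn
          (fun α0 => δ * (α0 + ((1 - δ) / (k1 * c1)) ^ (1 / (k1 - 1))) - c0 * α0 ^ k0)
          (Set.Ici (0 : ℝ)) α0 →
        α0 = α0s) ∧
    -- so that the equilibrium domain performance is `α₁*`
    α1s = α0s + ((1 - δ) / (k1 * c1)) ^ (1 / (k1 - 1)) := by
  subst hα0s hα1s
  have hδ' : 0 ≤ 1 - δ := sub_nonneg.2 hδ1
  set β := ((1 - δ) / (k1 * c1)) ^ (1 / (k1 - 1))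
  have hβ : 0 ≤ β :=
    Real.rpow_nonneg (div_nonneg hδ' (by positivity)) _
  have hα0 : 0 ≤ (δ / (k0 * c0)) ^ (1 / (k0 - 1)) :=
    Real.rpow_nonneg (div_nonneg hδ0 (by positivity)) _
  have specialist (α0 α1 : ℝ) (h : α0 ≤ α1) := isMaxOn_linear_sub_rpow_sub_iff hδ' hc1 hk1 h
  have generalist (α0 : ℝ) (h : 0 ≤ α0) := isMaxOn_linear_add_sub_rpow_iff hδ0 hc0 hk0 β h
  exact ⟨fun α0 _ => ⟨(specialist α0 _ (le_add_of_nonneg_right hβ)).2 rfl,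
      fun α1 h => (specialist α0 α1 h).1⟩,
    ⟨(generalist _ hα0).2 rfl, fun α0 h => (generalist α0 h).1⟩, rfl⟩
end

section
/- In the one-specialist fine-tuning game with quadratic costs (k₀ = k₁ = 2), the value δ ∈ [0,1] maximizing the generalist's equilibrium utility U_G(δ) = δ²/(4c₀) + δ/(2c₁) - δ²/(2c₁) is δ = c₀/(2c₀ - c₁) if c₁ < c₀, and δ = 1 if c₁ ≥ c₀. -/
/-!
Writing `U_G(δ) = a δ² + b δ` with `a = 1/(4c₀) - 1/(2c₁)` and `b = 1/(2c₁)`, the quadratic is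
concave exactly when `c₁ < 2c₀`. For `c₁ < c₀` its vertex `-b/(2a) = c₀/(2c₀ - c₁)` lies in `[0,1]`.
For `c₀ ≤ c₁` the slope `2a + b` of `U_G` at `1` is nonnegative, and
`U_G(1) - U_G(δ) = (1 - δ)(a(1 + δ) + b)` has both factors nonnegative on `[0,1]`.
-/

open Set

theorem isMaxOn_quadratic_vertex {a : ℝ} (b : ℝ) (ha : a < 0) (s : Set ℝ) :
    IsMaxOn (fun x => a * x ^ 2 + b * x) s (-b / (2 * a)) := by
  refine isMaxOn_iff.mpr fun x _ => ?_
  have ha0 := ha.ne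
  have hsq : a * (-b / (2 * a)) ^ 2 + b * (-b / (2 * a)) - (a * x ^ 2 + b * x)
      = -a * (x + b / (2 * a)) ^ 2 := by
    field_simp
    ring
  have hnonneg : 0 ≤ -a * (x + b / (2 * a)) ^ 2 := by
    have := neg_pos.mpr ha
    positivity
  exact sub_nonneg.mp (hsq ▸ hnonneg)

theorem isMaxOn_quadratic_Icc_one {a b : ℝ} (hb : 0 ≤ b) (hab : 0 ≤ 2 * a + b) :
    IsMaxOn (fun x => a * x ^ 2 + b * x) (Icc 0 1) 1 := by
  refine isMaxOn_iff.mpr fun x ⟨hx0, hx1⟩ => ?_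
  have hfac : a * 1 ^ 2 + b * 1 - (a * x ^ 2 + b * x) = (1 - x) * (a * (1 + x) + b) := by ring
  have hlin : 0 ≤ a * (1 + x) + b := by nlinarith
  exact sub_nonneg.mp (hfac ▸ mul_nonneg (sub_nonneg.mpr hx1) hlin)

/-- Powerful-G solution with quadratic costs: `U_G` is maximized on `[0,1]`
at `c₀/(2c₀-c₁)` if `c₁ < c₀`, and at `1` if `c₁ ≥ c₀`. -/
theorem stmt6 (c0 c1 : ℝ) (hc0 : 0 < c0) (hc1 : 0 < c1) :
    (c1 < c0 →
      c0 / (2 * c0 - c1) ∈ Set.Icc (0 : ℝ) 1 ∧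
      IsMaxOn (fun δ : ℝ => δ ^ 2 / (4 * c0) + δ / (2 * c1) - δ ^ 2 / (2 * c1))
        (Set.Icc 0 1) (c0 / (2 * c0 - c1))) ∧
    (c0 ≤ c1 →
      IsMaxOn (fun δ : ℝ => δ ^ 2 / (4 * c0) + δ / (2 * c1) - δ ^ 2 / (2 * c1))
        (Set.Icc 0 1) 1) := by
  set a := 1 / (4 * c0) - 1 / (2 * c1)
  set b := 1 / (2 * c1)
  have hU : (fun δ : ℝ => δ ^ 2 / (4 * c0) + δ / (2 * c1) - δ ^ 2 / (2 * c1))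
      = fun δ => a * δ ^ 2 + b * δ := by
    funext δ
    ring
  rw [hU]
  refine ⟨fun h => ?_, fun h => isMaxOn_quadratic_Icc_one (by positivity) ?_⟩
  · have hden : 0 < 2 * c0 - c1 := by linarith
    have ha_eq : a = -(2 * c0 - c1) / (4 * c0 * c1) := by
      simp only [a]
      field_simp
      ring
    have ha : a < 0 := by
      rw [ha_eq]
      exact div_neg_of_neg_of_pos (neg_neg_of_pos hden) (by positivity)
    have hvertex : c0 / (2 * c0 - c1) = -b / (2 * a) := by
      simp only [ha_eq, b]
      field_simp
      norm_num
    refine ⟨⟨by positivity, (div_le_one hden).mpr (by linarith)⟩, ?_⟩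
    rw [hvertex]
    exact isMaxOn_quadratic_vertex b ha _
  · have hslope : 2 * a + b = (c1 - c0) / (2 * c0 * c1) := by
      simp only [a, b]
      field_simp
      ring
    rw [hslope]
    exact div_nonneg (by linarith) (by positivity)
end

section
/- In the one-specialist fine-tuning game with quadratic costs, the unique δ ∈ [0,1] maximizing the sum of utilities U_G(δ) + U_D(δ) is δ = c₁/(c₀ + c₁) (the Vertical Monopoly solution). -/
/-! Completing the square, `U_G(δ) + U_D(δ) = M - a (δ - δ₀)²` with `a = (c₀ + c₁)/(4 c₀ c₁) > 0` and
`δ₀ = c₁/(c₀ + c₁) ∈ [0, 1]`, so `δ₀` is the maximizer on `[0, 1]` and every other point is strictly worse. -/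

section DownwardParabola

variable {a M x₀ : ℝ}

theorem isMaxOn_sub_mul_sq (ha : 0 ≤ a) (s : Set ℝ) :
    IsMaxOn (fun x => M - a * (x - x₀) ^ 2) s x₀ :=
  isMaxOn_iff.mpr fun x _ => by
    have : 0 ≤ a * (x - x₀) ^ 2 := by positivity
    linarith [sub_self x₀]

theorem eq_of_isMaxOn_sub_mul_sq (ha : 0 < a) {s : Set ℝ} {x : ℝ} (hx₀ : x₀ ∈ s)
    (hx : IsMaxOn (fun x => M - a * (x - x₀) ^ 2) s x) : x = x₀ := by
  have hle : a * (x - x₀) ^ 2 ≤ 0 := by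
    have := isMaxOn_iff.mp hx x₀ hx₀
    simp only [sub_self] at this
    linarith
  have hsq : (x - x₀) ^ 2 = 0 :=
    le_antisymm ((mul_nonpos_iff_pos_imp_nonpos.mp hle).1 ha) (sq_nonneg _)
  exact sub_eq_zero.mp (pow_eq_zero_iff two_ne_zero |>.mp hsq)

end DownwardParabola

theorem div_add_mem_Icc_zero_one {c0 c1 : ℝ} (hc0 : 0 ≤ c0) (hc1 : 0 ≤ c1) :
    c1 / (c0 + c1) ∈ Set.Icc (0 : ℝ) 1 :=
  ⟨by positivity, div_le_one_of_le₀ (by linarith) (by positivity)⟩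

theorem welfare_eq_sub_mul_sq {c0 c1 : ℝ} (hc0 : 0 < c0) (hc1 : 0 < c1) (δ : ℝ) :
    (δ ^ 2 / (4 * c0) + δ / (2 * c1) - δ ^ 2 / (2 * c1)) +
      (1 / (4 * c1) + (1 / (2 * c0) - 1 / (2 * c1)) * δ
        + (1 / (4 * c1) - 1 / (2 * c0)) * δ ^ 2)
      = (c1 / (4 * c0 * (c0 + c1)) + 1 / (4 * c1))
        - (c0 + c1) / (4 * c0 * c1) * (δ - c1 / (c0 + c1)) ^ 2 := by
  have : 0 < c0 + c1 := by linarith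
  field_simp
  ring

/-- Vertical Monopoly solution with quadratic costs: the unique `δ ∈ [0,1]`
maximizing `U_G + U_D` is `c₁/(c₀+c₁)`. -/
theorem stmt8 (c0 c1 : ℝ) (hc0 : 0 < c0) (hc1 : 0 < c1)
    (UG UD : ℝ → ℝ)
    (hUG : UG = fun δ => δ ^ 2 / (4 * c0) + δ / (2 * c1) - δ ^ 2 / (2 * c1))
    (hUD : UD = fun δ => 1 / (4 * c1) + (1 / (2 * c0) - 1 / (2 * c1)) * δ
      + (1 / (4 * c1) - 1 / (2 * c0)) * δ ^ 2) :
    c1 / (c0 + c1) ∈ Set.Icc (0 : ℝ) 1 ∧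
    IsMaxOn (fun δ => UG δ + UD δ) (Set.Icc 0 1) (c1 / (c0 + c1)) ∧
    ∀ δ ∈ Set.Icc (0 : ℝ) 1,
      IsMaxOn (fun δ => UG δ + UD δ) (Set.Icc 0 1) δ → δ = c1 / (c0 + c1) := by
  have hwelfare : (fun δ => UG δ + UD δ) = fun δ =>
      (c1 / (4 * c0 * (c0 + c1)) + 1 / (4 * c1))
        - (c0 + c1) / (4 * c0 * c1) * (δ - c1 / (c0 + c1)) ^ 2 := by
    subst hUG hUD
    exact funext (welfare_eq_sub_mul_sq hc0 hc1)
  have hcurv : 0 < (c0 + c1) / (4 * c0 * c1) := by positivity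
  have hmem := div_add_mem_Icc_zero_one hc0.le hc1.le
  rw [hwelfare]
  exact ⟨hmem, isMaxOn_sub_mul_sq hcurv.le _,
    fun _ _ hδ => eq_of_isMaxOn_sub_mul_sq hcurv hmem hδ⟩
end

section
/- In the quadratic-cost fine-tuning game with c₀ ≠ c₁, δ* = (-√(c₀² - c₀c₁ + c₁²) - c₁ + 2c₀)/(3(c₀ - c₁)) lies in [0,1] and satisfies U_G(δ*) = U_D(δ*); i.e., it equalizes the two players' utilities (the Egalitarian solution). -/
/-!
With `s = √(c₀² - c₀c₁ + c₁²)` and `D = 3(c₀ - c₁)`, completing the square gives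
`-D · q(δ) = (Dδ - (2c₀ - c₁))² - s²` for the quadratic `q` obtained by equating the utilities,
so `δ* = (2c₀ - c₁ - s)/D` is a root. Comparing `s²` with `(2c₀ - c₁)²` shows that `δ* ≥ 0`, and
`1 - δ*(c₀, c₁) = δ*(c₁, c₀)` turns this into `δ* ≤ 1`.
-/

open Real Set

noncomputable def egalitarianShare (c0 c1 : ℝ) : ℝ :=
  (-√(c0 ^ 2 - c0 * c1 + c1 ^ 2) - c1 + 2 * c0) / (3 * (c0 - c1))

lemma egalitarian_discriminant_nonneg (c0 c1 : ℝ) : 0 ≤ c0 ^ 2 - c0 * c1 + c1 ^ 2 := by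
  nlinarith [sq_nonneg (c0 - c1), sq_nonneg c0, sq_nonneg c1]

lemma egalitarianShare_nonneg {c0 : ℝ} (c1 : ℝ) (hc0 : 0 ≤ c0) : 0 ≤ egalitarianShare c0 c1 := by
  have hsq : (2 * c0 - c1) ^ 2 - (c0 ^ 2 - c0 * c1 + c1 ^ 2) = 3 * c0 * (c0 - c1) := by ring
  rcases lt_or_ge c0 c1 with h | h
  · have hs : 2 * c0 - c1 ≤ √(c0 ^ 2 - c0 * c1 + c1 ^ 2) :=
      (le_abs_self _).trans (abs_le_sqrt (by nlinarith))
    exact div_nonneg_of_nonpos (by linarith) (by linarith)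
  · have hs : √(c0 ^ 2 - c0 * c1 + c1 ^ 2) ≤ 2 * c0 - c1 :=
      sqrt_le_iff.mpr ⟨by linarith, by nlinarith⟩
    exact div_nonneg (by linarith) (by linarith)

lemma one_sub_egalitarianShare {c0 c1 : ℝ} (hne : c0 ≠ c1) :
    1 - egalitarianShare c0 c1 = egalitarianShare c1 c0 := by
  have hd : c0 - c1 ≠ 0 := sub_ne_zero.mpr hne
  have hd' : c1 - c0 ≠ 0 := sub_ne_zero.mpr hne.symm
  unfold egalitarianShare
  rw [show c1 ^ 2 - c1 * c0 + c0 ^ 2 = c0 ^ 2 - c0 * c1 + c1 ^ 2 by ring]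
  field_simp
  ring

lemma egalitarianShare_mem_Icc {c0 c1 : ℝ} (hc0 : 0 ≤ c0) (hc1 : 0 ≤ c1) (hne : c0 ≠ c1) :
    egalitarianShare c0 c1 ∈ Icc 0 1 := by
  refine ⟨egalitarianShare_nonneg c1 hc0, ?_⟩
  have := egalitarianShare_nonneg c0 hc1
  linarith [one_sub_egalitarianShare hne]

lemma egalitarianShare_isRoot {c0 c1 : ℝ} (hne : c0 ≠ c1) :
    egalitarianShare c0 c1 ^ 2 * (3 * c1 - 3 * c0) + egalitarianShare c0 c1 * (4 * c0 - 2 * c1)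
      - c0 = 0 := by
  set δ := egalitarianShare c0 c1
  have hD : 3 * (c0 - c1) ≠ 0 := by
    have := sub_ne_zero.mpr hne
    positivity
  have hs := sq_sqrt (egalitarian_discriminant_nonneg c0 c1)
  have hδ : 3 * (c0 - c1) * δ = 2 * c0 - c1 - √(c0 ^ 2 - c0 * c1 + c1 ^ 2) := by
    simp only [δ, egalitarianShare]
    field_simp
    ring
  have hsquare : -(3 * (c0 - c1)) * (δ ^ 2 * (3 * c1 - 3 * c0) + δ * (4 * c0 - 2 * c1) - c0)
      = (3 * (c0 - c1) * δ - (2 * c0 - c1)) ^ 2 - (c0 ^ 2 - c0 * c1 + c1 ^ 2) := by ring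
  rw [hδ, sub_sub_cancel_left, neg_sq, hs, sub_self] at hsquare
  simpa [hD] using hsquare

lemma utilities_eq_iff {c0 c1 : ℝ} (hc0 : c0 ≠ 0) (hc1 : c1 ≠ 0) (δ : ℝ) :
    δ ^ 2 / (4 * c0) + δ / (2 * c1) - δ ^ 2 / (2 * c1)
        = 1 / (4 * c1) + (1 / (2 * c0) - 1 / (2 * c1)) * δ
          + (1 / (4 * c1) - 1 / (2 * c0)) * δ ^ 2 ↔
      δ ^ 2 * (3 * c1 - 3 * c0) + δ * (4 * c0 - 2 * c1) - c0 = 0 := by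
  field_simp
  constructor <;> intro h
  · linear_combination h / 2
  · linear_combination 2 * h

/-- Egalitarian solution with quadratic costs: for `c₀ ≠ c₁`, the stated root
lies in `[0,1]` and equalizes the two players' utilities. -/
theorem stmt9 (c0 c1 : ℝ) (hc0 : 0 < c0) (hc1 : 0 < c1) (hne : c0 ≠ c1)
    (δs : ℝ)
    (hδs : δs = (-Real.sqrt (c0 ^ 2 - c0 * c1 + c1 ^ 2) - c1 + 2 * c0)
      / (3 * (c0 - c1))) :
    δs ∈ Set.Icc (0 : ℝ) 1 ∧
    δs ^ 2 / (4 * c0) + δs / (2 * c1) - δs ^ 2 / (2 * c1)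
      = 1 / (4 * c1) + (1 / (2 * c0) - 1 / (2 * c1)) * δs
        + (1 / (4 * c1) - 1 / (2 * c0)) * δs ^ 2 := by
  change δs = egalitarianShare c0 c1 at hδs
  subst hδs
  exact ⟨egalitarianShare_mem_Icc hc0.le hc1.le hne,
    (utilities_eq_iff hc0.ne' hc1.ne' _).mpr (egalitarianShare_isRoot hne)⟩
end

section
/- Let U_D, U_G : [0,1] → ℝ be strictly unimodal with maximizers m_D, m_G respectively. Then every δ in the interval [min(m_D,m_G), max(m_D,m_G)] at which both U_D(δ) > 0 and U_G(δ) > 0 is Pareto-optimal (no other δ' ∈ [0,1] weakly improves both utilities and strictly improves one), and every δ outside [min(m_D,m_G), max(m_D,m_G)] is Pareto-dominated. -/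
open Set

section Pareto

variable {α β : Type*} [Preorder β] {f g : α → β} {x y : α}

/-- `y` Pareto-dominates `x` for the pair of utilities `f`, `g`. -/
def ParetoDominates (f g : α → β) (x y : α) : Prop :=
  f x ≤ f y ∧ g x ≤ g y ∧ (f x < f y ∨ g x < g y)

theorem ParetoDominates.of_lt_of_lt (hf : f x < f y) (hg : g x < g y) :
    ParetoDominates f g x y :=
  ⟨hf.le, hg.le, Or.inl hf⟩

theorem not_paretoDominates_of_lt_or_lt (h : f y < f x ∨ g y < g x) :
    ¬ ParetoDominates f g x y := by
  rintro ⟨hfle, hgle, -⟩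
  rcases h with hf | hg
  · exact (hf.trans_le hfle).false
  · exact (hg.trans_le hgle).false

theorem not_paretoDominates_self : ¬ ParetoDominates f g x x := by
  rintro ⟨-, -, hf | hg⟩
  exacts [hf.false, hg.false]

end Pareto

section Unimodal

variable {α β : Type*} [LinearOrder α] [Preorder β] {f g : α → β} {a b mf mg x y : α}

theorem StrictMonoOn.lt_of_Icc (hf : StrictMonoOn f (Icc a mf)) (hy : a ≤ y) (hyx : y < x)
    (hx : x ≤ mf) : f y < f x :=
  hf ⟨hy, hyx.le.trans hx⟩ ⟨hy.trans hyx.le, hx⟩ hyx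

theorem StrictAntiOn.lt_of_Icc (hf : StrictAntiOn f (Icc mf b)) (hx : mf ≤ x) (hxy : x < y)
    (hy : y ≤ b) : f y < f x :=
  hf ⟨hx, hxy.le.trans hy⟩ ⟨hx.trans hxy.le, hy⟩ hxy

theorem lt_or_lt_of_mem_Icc_min_max (hf₁ : StrictMonoOn f (Icc a mf))
    (hf₂ : StrictAntiOn f (Icc mf b)) (hg₁ : StrictMonoOn g (Icc a mg))
    (hg₂ : StrictAntiOn g (Icc mg b)) (hx : x ∈ Icc (min mf mg) (max mf mg)) (hy : y ∈ Icc a b)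
    (hyx : y ≠ x) : f y < f x ∨ g y < g x := by
  rcases hyx.lt_or_gt with hlt | hgt
  · rcases le_max_iff.mp hx.2 with hxf | hxg
    · exact Or.inl (hf₁.lt_of_Icc hy.1 hlt hxf)
    · exact Or.inr (hg₁.lt_of_Icc hy.1 hlt hxg)
  · rcases min_le_iff.mp hx.1 with hfx | hgx
    · exact Or.inl (hf₂.lt_of_Icc hfx hgt hy.2)
    · exact Or.inr (hg₂.lt_of_Icc hgx hgt hy.2)

theorem not_paretoDominates_of_mem_Icc_min_max (hf₁ : StrictMonoOn f (Icc a mf))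
    (hf₂ : StrictAntiOn f (Icc mf b)) (hg₁ : StrictMonoOn g (Icc a mg))
    (hg₂ : StrictAntiOn g (Icc mg b)) (hx : x ∈ Icc (min mf mg) (max mf mg))
    (hy : y ∈ Icc a b) : ¬ ParetoDominates f g x y := by
  rcases eq_or_ne y x with rfl | hyx
  · exact not_paretoDominates_self
  · exact not_paretoDominates_of_lt_or_lt (lt_or_lt_of_mem_Icc_min_max hf₁ hf₂ hg₁ hg₂ hx hy hyx)

theorem paretoDominates_min (hf : StrictMonoOn f (Icc a mf)) (hg : StrictMonoOn g (Icc a mg))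
    (ha : a ≤ x) (hx : x < min mf mg) : ParetoDominates f g x (min mf mg) :=
  .of_lt_of_lt (hf.lt_of_Icc ha hx (min_le_left _ _)) (hg.lt_of_Icc ha hx (min_le_right _ _))

theorem paretoDominates_max (hf : StrictAntiOn f (Icc mf b)) (hg : StrictAntiOn g (Icc mg b))
    (hx : max mf mg < x) (hb : x ≤ b) : ParetoDominates f g x (max mf mg) :=
  .of_lt_of_lt (hf.lt_of_Icc (le_max_left _ _) hx hb) (hg.lt_of_Icc (le_max_right _ _) hx hb)

end Unimodal

/-- Pareto-optimal bargains for strictly unimodal utilities: every `δ` between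
the two maximizers at which both utilities are positive is Pareto-optimal, and
every `δ ∈ [0,1]` outside that interval is Pareto-dominated. -/
theorem stmt11 (UD UG : ℝ → ℝ) (mD mG : ℝ)
    (hmD : mD ∈ Set.Icc (0 : ℝ) 1) (hmG : mG ∈ Set.Icc (0 : ℝ) 1)
    (hD1 : StrictMonoOn UD (Set.Icc 0 mD)) (hD2 : StrictAntiOn UD (Set.Icc mD 1))
    (hG1 : StrictMonoOn UG (Set.Icc 0 mG)) (hG2 : StrictAntiOn UG (Set.Icc mG 1)) :
    (∀ δ ∈ Set.Icc (min mD mG) (max mD mG), 0 < UD δ → 0 < UG δ →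
      ¬ ∃ δ' ∈ Set.Icc (0 : ℝ) 1,
          UD δ ≤ UD δ' ∧ UG δ ≤ UG δ' ∧ (UD δ < UD δ' ∨ UG δ < UG δ')) ∧
    (∀ δ ∈ Set.Icc (0 : ℝ) 1, δ ∉ Set.Icc (min mD mG) (max mD mG) →
      ∃ δ' ∈ Set.Icc (0 : ℝ) 1,
        UD δ ≤ UD δ' ∧ UG δ ≤ UG δ' ∧ (UD δ < UD δ' ∨ UG δ < UG δ')) := by
  have hmin : min mD mG ∈ Icc (0 : ℝ) 1 := ⟨le_min hmD.1 hmG.1, (min_le_left _ _).trans hmD.2⟩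
  have hmax : max mD mG ∈ Icc (0 : ℝ) 1 := ⟨hmD.1.trans (le_max_left _ _), max_le hmD.2 hmG.2⟩
  refine ⟨fun δ hδ _ _ ⟨δ', hδ', hdom⟩ =>
    not_paretoDominates_of_mem_Icc_min_max hD1 hD2 hG1 hG2 hδ hδ' hdom, fun δ hδ hout => ?_⟩
  rcases not_and_or.mp hout with hlt | hgt
  · exact ⟨_, hmin, paretoDominates_min hD1 hG1 hδ.1 (not_le.mp hlt)⟩
  · exact ⟨_, hmax, paretoDominates_max hD2 hG2 (not_le.mp hgt) hδ.2⟩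
end

section
/- In the multi-specialist single-bargain fine-tuning game with n specialists and polynomial costs, for fixed δ the subgame-perfect equilibrium strategies are α₀* = (nδ/(c₀k₀))^{1/(k₀-1)} and αᵢ* = (nδ/(c₀k₀))^{1/(k₀-1)} + ((1-δ)/(cᵢkᵢ))^{1/(kᵢ-1)} for each specialist i. -/
/-! Both players face the problem of maximizing `A x - C x ^ b` over `x ≥ 0` (the specialist after
the shift `x = α - α₀`; the generalist because, given the best responses, its payoff is
`n δ α₀ - c₀ α₀ ^ k₀` plus a constant). The first-order condition `C b m ^ (b - 1) = A` gives the
maximizer `m`, and it is global because `x ^ b` lies above its tangent line at `m`. -/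

open Real Set

lemma Real.rpow_add_mul_sub_le_rpow {b m x : ℝ} (hb : 1 < b) (hm : 0 ≤ m) (hx : 0 ≤ x) :
    m ^ b + b * m ^ (b - 1) * (x - m) ≤ x ^ b := by
  rcases hm.eq_or_lt with rfl | hm
  · simp [zero_rpow (by linarith : b ≠ 0), zero_rpow (by linarith : b - 1 ≠ 0),
      rpow_nonneg hx]
  -- Bernoulli's inequality at `x / m = 1 + (x / m - 1)`, scaled by `m ^ b`
  have hbern := one_add_mul_self_le_rpow_one_add
    (by linarith [div_nonneg hx hm.le] : -1 ≤ x / m - 1) hb.le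
  rw [add_sub_cancel, div_rpow hx hm.le, le_div_iff₀ (rpow_pos_of_pos hm b)] at hbern
  have hmb : m ^ b = m ^ (b - 1) * m := by
    rw [← rpow_add_one hm.ne', sub_add_cancel]
  calc m ^ b + b * m ^ (b - 1) * (x - m) = (1 + b * (x / m - 1)) * m ^ b := by
        rw [hmb]; field_simp
    _ ≤ x ^ b := hbern

lemma isMaxOn_mul_sub_mul_rpow {A C b : ℝ} (hA : 0 ≤ A) (hC : 0 < C) (hb : 1 < b) :
    IsMaxOn (fun x => A * x - C * x ^ b) (Ici 0) ((A / (C * b)) ^ (1 / (b - 1))) := by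
  set m := (A / (C * b)) ^ (1 / (b - 1))
  have hq : 0 ≤ A / (C * b) := by positivity
  have hm : 0 ≤ m := rpow_nonneg hq _
  have hfoc : C * b * m ^ (b - 1) = A := by
    rw [← rpow_mul hq, one_div_mul_cancel (by linarith), rpow_one]
    field_simp
  intro x (hx : 0 ≤ x)
  show A * x - C * x ^ b ≤ A * m - C * m ^ b
  nlinarith [mul_le_mul_of_nonneg_left (rpow_add_mul_sub_le_rpow hb hm hx) hC.le]

lemma isMaxOn_mul_sub_mul_sub_rpow {A C b : ℝ} (a : ℝ) (hA : 0 ≤ A) (hC : 0 < C) (hb : 1 < b) :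
    IsMaxOn (fun x => A * x - C * (x - a) ^ b) (Ici a) (a + (A / (C * b)) ^ (1 / (b - 1))) := by
  intro x (hx : a ≤ x)
  have h := isMaxOn_mul_sub_mul_rpow hA hC hb (show x - a ∈ Ici 0 from sub_nonneg.mpr hx)
  simp only [mem_ofPred_eq, add_sub_cancel_left] at h ⊢
  linarith

theorem stmt12_general (n : ℕ) (c0 k0 δ : ℝ) (c k : Fin n → ℝ)
    (hc0 : 0 < c0) (hk0 : 1 < k0)
    (hc : ∀ i, 0 < c i) (hk : ∀ i, 1 < k i)
    (hδ0 : 0 ≤ δ) (hδ1 : δ ≤ 1)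
    (α0s : ℝ) (αs : Fin n → ℝ)
    (hα0s : α0s = ((n : ℝ) * δ / (c0 * k0)) ^ (1 / (k0 - 1)))
    (hαs : ∀ i, αs i = ((n : ℝ) * δ / (c0 * k0)) ^ (1 / (k0 - 1))
      + ((1 - δ) / (c i * k i)) ^ (1 / (k i - 1))) :
    -- each specialist's best response to any `α₀ ≥ 0`
    (∀ α0, 0 ≤ α0 → ∀ i,
      IsMaxOn (fun α => (1 - δ) * α - c i * (α - α0) ^ (k i)) (Set.Ici α0)
        (α0 + ((1 - δ) / (c i * k i)) ^ (1 / (k i - 1)))) ∧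
    -- the generalist, anticipating the best responses, optimally invests `α₀*`
    IsMaxOn
      (fun α0 => (∑ i, δ * (α0 + ((1 - δ) / (c i * k i)) ^ (1 / (k i - 1))))
        - c0 * α0 ^ k0)
      (Set.Ici (0 : ℝ)) α0s ∧
    -- and each equilibrium domain performance is the best response at `α₀*`
    (∀ i, αs i = α0s + ((1 - δ) / (c i * k i)) ^ (1 / (k i - 1))) := by
  refine ⟨fun α0 _ i => isMaxOn_mul_sub_mul_sub_rpow α0 (sub_nonneg.mpr hδ1) (hc i) (hk i),
    ?_, fun i => by rw [hαs i, hα0s]⟩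
  set bonus := ∑ i, δ * ((1 - δ) / (c i * k i)) ^ (1 / (k i - 1))
  have hsum : ∀ y : ℝ, ∑ i, δ * (y + ((1 - δ) / (c i * k i)) ^ (1 / (k i - 1)))
      = n * δ * y + bonus := fun y => by
    simp only [mul_add, Finset.sum_add_distrib, Finset.sum_const, Finset.card_univ,
      Fintype.card_fin, nsmul_eq_mul]
    ring
  have hmax := isMaxOn_mul_sub_mul_rpow (by positivity : (0 : ℝ) ≤ n * δ) hc0 hk0
  rw [← hα0s] at hmax
  intro x hx
  have h := hmax hx
  simp only [mem_ofPred_eq, hsum] at h ⊢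
  linarith

/-- Multi-specialist single-bargain fine-tuning game with polynomial costs:
for fixed `δ`, the subgame-perfect equilibrium strategies are
`α₀* = (nδ/(c₀k₀))^(1/(k₀-1))` and `αᵢ* = α₀* + ((1-δ)/(cᵢkᵢ))^(1/(kᵢ-1))`. -/
theorem stmt12 (n : ℕ) (hn : 1 ≤ n) (c0 k0 δ : ℝ) (c k : Fin n → ℝ)
    (hc0 : 0 < c0) (hk0 : 1 < k0)
    (hc : ∀ i, 0 < c i) (hk : ∀ i, 1 < k i)
    (hδ0 : 0 ≤ δ) (hδ1 : δ ≤ 1)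
    (α0s : ℝ) (αs : Fin n → ℝ)
    (hα0s : α0s = ((n : ℝ) * δ / (c0 * k0)) ^ (1 / (k0 - 1)))
    (hαs : ∀ i, αs i = ((n : ℝ) * δ / (c0 * k0)) ^ (1 / (k0 - 1))
      + ((1 - δ) / (c i * k i)) ^ (1 / (k i - 1))) :
    -- each specialist's best response to any `α₀ ≥ 0`
    (∀ α0, 0 ≤ α0 → ∀ i,
      IsMaxOn (fun α => (1 - δ) * α - c i * (α - α0) ^ (k i)) (Set.Ici α0)
        (α0 + ((1 - δ) / (c i * k i)) ^ (1 / (k i - 1)))) ∧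
    -- the generalist, anticipating the best responses, optimally invests `α₀*`
    IsMaxOn
      (fun α0 => (∑ i, δ * (α0 + ((1 - δ) / (c i * k i)) ^ (1 / (k i - 1))))
        - c0 * α0 ^ k0)
      (Set.Ici (0 : ℝ)) α0s ∧
    -- and each equilibrium domain performance is the best response at `α₀*`
    (∀ i, αs i = α0s + ((1 - δ) / (c i * k i)) ^ (1 / (k i - 1))) :=
  stmt12_general n c0 k0 δ c k hc0 hk0 hc hk hδ0 hδ1 α0s αs hα0s hαs
end

section
/- In the multi-specialist single-bargain game with quadratic costs, the unique δ maximizing the total utility U_G(δ) + Σᵢ U_{Dᵢ}(δ) is δ = n²/(n² + Σᵢ c₀/cᵢ). -/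
/-!
Summed over the players, the total utility is the quadratic
`-(n²/(4c₀) + Σᵢ 1/(4cᵢ)) δ² + n²/(2c₀) δ + Σᵢ 1/(4cᵢ)`, whose leading coefficient is negative,
so by completing the square its unique maximizer is the vertex `n²/(n² + Σᵢ c₀/cᵢ)`.
-/

open Finset

lemma isMaxOn_univ_quadratic_iff {K : Type*} [Field K] [LinearOrder K] [IsStrictOrderedRing K]
    {a : K} (ha : a < 0) (b k x₀ : K) :
    IsMaxOn (fun x => a * x ^ 2 + b * x + k) Set.univ x₀ ↔ x₀ = -b / (2 * a) := by
  set v := -b / (2 * a)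
  have hsq : (fun x => a * x ^ 2 + b * x + k)
      = fun x => a * (x - v) ^ 2 + (k - b ^ 2 / (4 * a)) := by
    funext x
    simp only [v]
    field_simp [ha.ne]
    ring
  rw [hsq, isMaxOn_univ_iff]
  constructor
  · intro hmax
    have hle := hmax v
    simp only [sub_self] at hle
    have hdev : (x₀ - v) ^ 2 = 0 :=
      le_antisymm (nonpos_of_mul_nonneg_right (by linarith) ha) (sq_nonneg _)
    exact sub_eq_zero.mp (pow_eq_zero_iff two_ne_zero |>.mp hdev)
  · intro hx x
    simpa [hx] using mul_nonpos_of_nonpos_of_nonneg ha.le (sq_nonneg (x - v))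

lemma total_utility_eq (n : ℕ) (c0 : ℝ) (c : Fin n → ℝ) (δ : ℝ) :
    ((n : ℝ) ^ 2 / (4 * c0)) * δ ^ 2 + δ * (1 - δ) * ∑ i, 1 / (2 * c i)
      + ∑ i, (1 / (4 * c i) + ((n : ℝ) / (2 * c0) - 1 / (2 * c i)) * δ
        + (1 / (4 * c i) - (n : ℝ) / (2 * c0)) * δ ^ 2)
    = -((n : ℝ) ^ 2 / (4 * c0) + (∑ i, 1 / c i) / 4) * δ ^ 2
      + (n : ℝ) ^ 2 / (2 * c0) * δ + (∑ i, 1 / c i) / 4 := by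
  have h2 : ∀ i, 1 / (2 * c i) = 1 / c i / 2 := fun i => by ring
  have h4 : ∀ i, 1 / (4 * c i) = 1 / c i / 4 := fun i => by ring
  simp only [h2, h4, sum_add_distrib, ← sum_mul, sum_sub_distrib, ← sum_div, sum_const,
    card_univ, Fintype.card_fin, nsmul_eq_mul]
  ring

/-- Vertical Monopoly solution in the multi-specialist single-bargain game with
quadratic costs: the unique `δ` maximizing total utility `U_G + Σᵢ U_{Dᵢ}` is
`n²/(n² + Σᵢ c₀/cᵢ)`. -/
theorem stmt15 (n : ℕ) (hn : 1 ≤ n) (c0 : ℝ) (c : Fin n → ℝ)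
    (hc0 : 0 < c0) (hc : ∀ i, 0 < c i)
    (UG : ℝ → ℝ) (UD : Fin n → ℝ → ℝ)
    (hUG : UG = fun δ => ((n : ℝ) ^ 2 / (4 * c0)) * δ ^ 2
      + δ * (1 - δ) * ∑ i, 1 / (2 * c i))
    (hUD : ∀ i, UD i = fun δ => 1 / (4 * c i)
      + ((n : ℝ) / (2 * c0) - 1 / (2 * c i)) * δ
      + (1 / (4 * c i) - (n : ℝ) / (2 * c0)) * δ ^ 2) :
    IsMaxOn (fun δ => UG δ + ∑ i, UD i δ) Set.univ
      ((n : ℝ) ^ 2 / ((n : ℝ) ^ 2 + ∑ i, c0 / c i)) ∧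
    ∀ δ : ℝ, IsMaxOn (fun δ => UG δ + ∑ i, UD i δ) Set.univ δ →
      δ = (n : ℝ) ^ 2 / ((n : ℝ) ^ 2 + ∑ i, c0 / c i) := by
  obtain rfl : UD = _ := funext hUD
  subst hUG
  simp only [total_utility_eq]
  set T := ∑ i, 1 / c i
  have hT : 0 ≤ T := sum_nonneg fun i _ => (one_div_pos.mpr (hc i)).le
  have hn0 : (0 : ℝ) < n := by exact_mod_cast hn
  have ha : -((n : ℝ) ^ 2 / (4 * c0) + T / 4) < 0 := neg_neg_of_pos (by positivity)
  have hvertex : (n : ℝ) ^ 2 / ((n : ℝ) ^ 2 + ∑ i, c0 / c i)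
      = -((n : ℝ) ^ 2 / (2 * c0)) / (2 * -((n : ℝ) ^ 2 / (4 * c0) + T / 4)) := by
    rw [show ∑ i, c0 / c i = c0 * T by simp only [T, mul_sum, mul_one_div]]
    field_simp
    ring
  rw [hvertex]
  exact ⟨(isMaxOn_univ_quadratic_iff ha _ _ _).2 rfl,
    fun δ hδ => (isMaxOn_univ_quadratic_iff ha _ _ _).1 hδ⟩
end

section
/- In the multi-specialist multi-bargain game with quadratic costs, specialist i's equilibrium utility U_{Dᵢ}(δ⃗) = ((Σⱼ δⱼ)/(2c₀))(1-δᵢ) + (1/(4cᵢ))(1-δᵢ)² is nondecreasing in δₖ for every k ≠ i; consequently, the vector of bargains maximizing U_{Dᵢ} over [0,1]ⁿ (with n ≥ 2 specialists) sets δⱼ = 1 for all j ≠ i and δᵢ = 0. -/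
/-!
Raising another specialist's bargain `δₖ` only enlarges the total `∑ⱼ δⱼ`, which enters
`U_{Dᵢ}` with the nonnegative weight `(1 - δᵢ)/(2c₀)`. For the maximum, bound
`∑ⱼ δⱼ ≤ δᵢ + (n - 1)`; then `(1 - δᵢ)(δᵢ + n - 1) = (n - 1) - δᵢ(δᵢ + n - 2) ≤ n - 1`
because `n ≥ 2`, and `(1 - δᵢ)² ≤ 1`, which are exactly the two terms of `U_{Dᵢ}` at the
bargain `δᵢ = 0`, `δⱼ = 1`.
-/

open Finset

section

variable {ι : Type*} [Fintype ι]

theorem sum_le_add_card_sub_one [DecidableEq ι] {δ : ι → ℝ} (hδ : ∀ j, δ j ≤ 1) (i : ι) :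
    ∑ j, δ j ≤ δ i + (Fintype.card ι - 1) := by
  have hcard : ((univ.erase i).card : ℝ) + 1 = Fintype.card ι := by
    exact_mod_cast card_erase_add_one (mem_univ i)
  have hrest : ∑ j ∈ univ.erase i, δ j ≤ (univ.erase i).card • (1 : ℝ) :=
    sum_le_card_nsmul _ _ 1 fun j _ => hδ j
  rw [nsmul_one] at hrest
  rw [← add_sum_erase _ _ (mem_univ i)]
  linarith

noncomputable def specialistUtility (c₀ cᵢ : ℝ) (i : ι) (δ : ι → ℝ) : ℝ :=
  (1 - δ i) * (∑ j, δ j) / (2 * c₀) + (1 - δ i) ^ 2 / (4 * cᵢ)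

variable {c₀ cᵢ : ℝ} {i : ι}

theorem specialistUtility_le_update [DecidableEq ι] (hc₀ : 0 < c₀) {δ : ι → ℝ}
    (hδi : δ i ≤ 1) {k : ι} (hk : k ≠ i) {t : ℝ} (ht : δ k ≤ t) :
    specialistUtility c₀ cᵢ i δ ≤ specialistUtility c₀ cᵢ i (Function.update δ k t) := by
  have hle : δ ≤ Function.update δ k t := le_update_iff.mpr ⟨ht, fun _ _ => le_rfl⟩
  have hsum : ∑ j, δ j ≤ ∑ j, Function.update δ k t j := sum_le_sum fun j _ => hle j
  unfold specialistUtility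
  rw [Function.update_of_ne hk.symm]
  gcongr

theorem specialistUtility_powerful [DecidableEq ι] :
    specialistUtility c₀ cᵢ i (fun j => if j = i then 0 else 1) =
      (Fintype.card ι - 1) / (2 * c₀) + 1 / (4 * cᵢ) := by
  have hsum : ∑ j : ι, (if j = i then (0 : ℝ) else 1) = Fintype.card ι - 1 := by
    simp [sum_ite, filter_ne', card_erase_of_mem, Nat.cast_pred (Fintype.card_pos_iff.mpr ⟨i⟩)]
  simp [specialistUtility, hsum]

theorem specialistUtility_le_powerful [DecidableEq ι] (hc₀ : 0 < c₀) (hcᵢ : 0 < cᵢ)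
    (hι : 2 ≤ Fintype.card ι) {δ : ι → ℝ} (hδ : ∀ j, δ j ∈ Set.Icc (0 : ℝ) 1) :
    specialistUtility c₀ cᵢ i δ ≤ specialistUtility c₀ cᵢ i (fun j => if j = i then 0 else 1) := by
  obtain ⟨hx₀, hx₁⟩ := hδ i
  have hn : (2 : ℝ) ≤ Fintype.card ι := by exact_mod_cast hι
  have hsum := sum_le_add_card_sub_one (fun j => (hδ j).2) i
  have hfirst : (1 - δ i) * ∑ j, δ j ≤ Fintype.card ι - 1 := calc
    (1 - δ i) * ∑ j, δ j ≤ (1 - δ i) * (δ i + (Fintype.card ι - 1)) := by gcongr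
    _ ≤ Fintype.card ι - 1 := by nlinarith
  have hsecond : (1 - δ i) ^ 2 ≤ 1 := by nlinarith
  rw [specialistUtility_powerful, specialistUtility]
  gcongr

end

/-- Powerful-Dᵢ solution in the multi-specialist multi-bargain game with quadratic
costs: `U_{Dᵢ}` is nondecreasing in every other bargain `δₖ` (k ≠ i), and it is
maximized over `[0,1]ⁿ` by setting `δⱼ = 1` for `j ≠ i` and `δᵢ = 0`. -/
theorem stmt18 (n : ℕ) (hn : 2 ≤ n) (c0 : ℝ) (c : Fin n → ℝ) (i : Fin n)
    (hc0 : 0 < c0) (hc : ∀ j, 0 < c j)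
    (U : (Fin n → ℝ) → ℝ)
    (hU : U = fun δ => (1 - δ i) * (∑ j, δ j) / (2 * c0)
      + (1 - δ i) ^ 2 / (4 * c i)) :
    (∀ δ : Fin n → ℝ, (∀ j, δ j ∈ Set.Icc (0 : ℝ) 1) →
      ∀ k, k ≠ i → ∀ t, δ k ≤ t → t ≤ 1 → U δ ≤ U (Function.update δ k t)) ∧
    IsMaxOn U {δ : Fin n → ℝ | ∀ j, δ j ∈ Set.Icc (0 : ℝ) 1}
      (fun j => if j = i then 0 else 1) := by
  obtain rfl : U = specialistUtility c0 (c i) i := hU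
  refine ⟨fun δ hδ k hk t ht _ => specialistUtility_le_update hc0 (hδ i).2 hk ht, ?_⟩
  exact fun δ hδ => specialistUtility_le_powerful hc0 (hc i) (by simpa using hn) hδ
end

section
/- Suppose a specialist with revenue rᵢ and cost φᵢ (both differentiable) faces a fixed general performance α₀ and share δᵢ ∈ [0,1), and its utility U(α) = (1-δᵢ)rᵢ(α) - φᵢ(α;α₀) is unimodal in α on [α₀,∞). Then: (a) if rᵢ(α₀) > φᵢ(α₀;α₀)/(1-δᵢ) and rᵢ'(α₀) > φᵢ'(α₀;α₀)/(1-δᵢ), the specialist's optimal action satisfies α* > α₀ and U(α*) > 0 (contributor); (b) if rᵢ(α₀) > φᵢ(α₀;α₀)/(1-δᵢ) and rᵢ'(α₀) < φᵢ'(α₀;α₀)/(1-δᵢ), the optimum is α* = α₀ with U(α₀) > 0 (free-rider); (c) if rᵢ(α₀) < φᵢ(α₀;α₀)/(1-δᵢ) and rᵢ'(α₀) < φᵢ'(α₀;α₀)/(1-δᵢ), the specialist prefers the disagreement payoff 0 to any α ≥ α₀ (abstainer). -/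
/-!
A function that increases up to a peak `m ≥ α₀` and decreases afterwards attains its maximum
over `[α₀, ∞)` at `m`. The sign of `U'(α₀) = (1 - δ) r'(α₀) - φ'(α₀)` locates the peak: if it is
positive, `U` cannot be antitone right of `α₀`, so `m > α₀`; if it is negative, `U` cannot be
monotone on a nondegenerate `[α₀, m]`, so `m = α₀`. The sign of `U(α₀) = (1 - δ) r(α₀) - φ(α₀)`
then decides between contributing, free-riding and abstaining.
-/

open Set

def UnimodalOnIci (f : ℝ → ℝ) (a : ℝ) : Prop :=
  ∃ m, a ≤ m ∧ MonotoneOn f (Icc a m) ∧ AntitoneOn f (Ici m)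

section Derivative

variable {f : ℝ → ℝ} {f' a : ℝ}

lemma HasDerivAt.nonpos_of_antitoneOn_Ici (hd : HasDerivAt f f' a) (hf : AntitoneOn f (Ici a)) :
    f' ≤ 0 := by
  refine hd.hasDerivWithinAt.nonpos_of_antitoneOn ?_ hf
  rw [accPt_principal_iff_nhdsWithin, Ici_sdiff_left]
  infer_instance

lemma HasDerivAt.nonneg_of_monotoneOn_Icc {b : ℝ} (hd : HasDerivAt f f' a) (hab : a < b)
    (hf : MonotoneOn f (Icc a b)) : 0 ≤ f' := by
  refine hd.hasDerivWithinAt.nonneg_of_monotoneOn ?_ hf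
  rw [accPt_principal_iff_nhdsWithin, Icc_sdiff_left, nhdsWithin_Ioc_eq_nhdsGT hab]
  infer_instance

end Derivative

namespace UnimodalOnIci

variable {f : ℝ → ℝ} {f' a : ℝ}

lemma isMaxOn_of_peak {m : ℝ} (ham : a ≤ m) (hmono : MonotoneOn f (Icc a m))
    (hanti : AntitoneOn f (Ici m)) : IsMaxOn f (Ici a) m := by
  intro x (hx : a ≤ x)
  rcases le_total x m with hxm | hmx
  · exact hmono ⟨hx, hxm⟩ ⟨ham, le_rfl⟩ hxm
  · exact hanti self_mem_Ici hmx hmx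

lemma exists_gt_isMaxOn_of_hasDerivAt_pos (hf : UnimodalOnIci f a) (hd : HasDerivAt f f' a)
    (hf' : 0 < f') : ∃ m, a < m ∧ IsMaxOn f (Ici a) m := by
  obtain ⟨m, ham, hmono, hanti⟩ := hf
  refine ⟨m, ham.lt_of_ne ?_, isMaxOn_of_peak ham hmono hanti⟩
  rintro rfl
  exact hf'.not_ge (hd.nonpos_of_antitoneOn_Ici hanti)

lemma isMaxOn_left_of_hasDerivAt_neg (hf : UnimodalOnIci f a) (hd : HasDerivAt f f' a)
    (hf' : f' < 0) : IsMaxOn f (Ici a) a := by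
  obtain ⟨m, ham, hmono, hanti⟩ := hf
  obtain rfl : a = m := ham.eq_of_not_lt fun ham ↦
    hf'.not_ge (hd.nonneg_of_monotoneOn_Icc ham hmono)
  exact isMaxOn_of_peak le_rfl hmono hanti

end UnimodalOnIci

theorem stmt19_general (r φ : ℝ → ℝ) (α0 δ : ℝ)
    (hr : Differentiable ℝ r) (hφ : Differentiable ℝ φ)
    (hδ1 : δ < 1)
    (U : ℝ → ℝ) (hU : U = fun α => (1 - δ) * r α - φ α)
    (hunimodal : ∃ m, α0 ≤ m ∧ MonotoneOn U (Set.Icc α0 m) ∧ AntitoneOn U (Set.Ici m)) :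
    -- (a) contributor
    ((φ α0 / (1 - δ) < r α0 ∧ deriv φ α0 / (1 - δ) < deriv r α0) →
      ∃ αs, α0 < αs ∧ IsMaxOn U (Set.Ici α0) αs ∧ 0 < U αs) ∧
    -- (b) free-rider
    ((φ α0 / (1 - δ) < r α0 ∧ deriv r α0 < deriv φ α0 / (1 - δ)) →
      IsMaxOn U (Set.Ici α0) α0 ∧ 0 < U α0) ∧
    -- (c) abstainer
    ((r α0 < φ α0 / (1 - δ) ∧ deriv r α0 < deriv φ α0 / (1 - δ)) →
      ∀ α, α0 ≤ α → U α < 0) := by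
  have hδ : 0 < 1 - δ := sub_pos.2 hδ1
  have hUd : HasDerivAt U ((1 - δ) * deriv r α0 - deriv φ α0) α0 := by
    subst hU
    exact ((hr α0).hasDerivAt.const_mul (1 - δ)).sub (hφ α0).hasDerivAt
  have hU0 : U α0 = (1 - δ) * r α0 - φ α0 := by rw [hU]
  have hunimodal : UnimodalOnIci U α0 := hunimodal
  refine ⟨fun ⟨hval, hslope⟩ ↦ ?_, fun ⟨hval, hslope⟩ ↦ ?_, fun ⟨hval, hslope⟩ ↦ ?_⟩
  · obtain ⟨m, hm, hmax⟩ := hunimodal.exists_gt_isMaxOn_of_hasDerivAt_pos hUd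
      (sub_pos.2 ((div_lt_iff₀' hδ).1 hslope))
    refine ⟨m, hm, hmax, ?_⟩
    calc 0 < U α0 := by rw [hU0]; exact sub_pos.2 ((div_lt_iff₀' hδ).1 hval)
      _ ≤ U m := hmax self_mem_Ici
  · refine ⟨hunimodal.isMaxOn_left_of_hasDerivAt_neg hUd
      (sub_neg.2 ((lt_div_iff₀' hδ).1 hslope)), ?_⟩
    rw [hU0]
    exact sub_pos.2 ((div_lt_iff₀' hδ).1 hval)
  · intro α hα
    calc U α ≤ U α0 := hunimodal.isMaxOn_left_of_hasDerivAt_neg hUd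
          (sub_neg.2 ((lt_div_iff₀' hδ).1 hslope)) hα
      _ < 0 := by rw [hU0]; exact sub_neg.2 ((lt_div_iff₀' hδ).1 hval)

/-- Specialist regimes (contributor / free-rider / abstainer), determined by the
0th- and 1st-order conditions at zero investment `α = α₀`, for a specialist with
differentiable revenue `r` and cost `φ`, share `δ ∈ [0,1)`, and utility
`U(α) = (1-δ) r(α) - φ(α)` unimodal on `[α₀,∞)`. -/
theorem stmt19 (r φ : ℝ → ℝ) (α0 δ : ℝ)
    (hr : Differentiable ℝ r) (hφ : Differentiable ℝ φ)
    (hδ0 : 0 ≤ δ) (hδ1 : δ < 1)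
    (U : ℝ → ℝ) (hU : U = fun α => (1 - δ) * r α - φ α)
    (hunimodal : ∃ m, α0 ≤ m ∧ MonotoneOn U (Set.Icc α0 m) ∧ AntitoneOn U (Set.Ici m)) :
    -- (a) contributor
    ((φ α0 / (1 - δ) < r α0 ∧ deriv φ α0 / (1 - δ) < deriv r α0) →
      ∃ αs, α0 < αs ∧ IsMaxOn U (Set.Ici α0) αs ∧ 0 < U αs) ∧
    -- (b) free-rider
    ((φ α0 / (1 - δ) < r α0 ∧ deriv r α0 < deriv φ α0 / (1 - δ)) →
      IsMaxOn U (Set.Ici α0) α0 ∧ 0 < U α0) ∧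
    -- (c) abstainer
    ((r α0 < φ α0 / (1 - δ) ∧ deriv r α0 < deriv φ α0 / (1 - δ)) →
      ∀ α, α0 ≤ α → U α < 0) :=
  stmt19_general r φ α0 δ hr hφ hδ1 U hU hunimodal
end
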